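/- arXiv:1507.08448 — 6 statements merged into one kernel-verified Lean document; each statement's English description precedes it below -/
import Mathlib

section
/- For all integers n ≥ 1 and p with 1 ≤ p ≤ n, the Stirling number of the second kind satisfies p^n/p! − (p−1)^n/(p−1)! ≤ S(n,p) ≤ p^n/p!. -/
/-- Stirling numbers of the second kind. -/
def stirling : ℕ → ℕ → ℕ
  | 0, 0 => 1
  | 0, _ + 1 => 0
  | _ + 1, 0 => 0
  | n + 1, p + 1 => (p + 1) * stirling n (p + 1) + stirling n p

lemma stirling_key (n p : ℕ) :
    ∑ k ∈ Finset.range (p + 1), p.choose k * k.factorial * stirling n k = p ^ n := by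
  induction n with
  | zero =>
    rw [Finset.sum_range_succ']
    simp [stirling]
  | succ n ih =>
    have hA : ∑ k ∈ Finset.range (p + 1), k * (p.choose k * k.factorial * stirling n k)
        = ∑ j ∈ Finset.range p, (j + 1) * (p.choose (j+1) * (j+1).factorial * stirling n (j+1)) := by
      rw [Finset.sum_range_succ']
      simp
    have hB : ∑ k ∈ Finset.range (p + 1), (p - k) * (p.choose k * k.factorial * stirling n k)
        = ∑ j ∈ Finset.range p, p.choose (j+1) * (j+1).factorial * stirling n j := by
      rw [Finset.sum_range_succ]
      simp only [Nat.sub_self, zero_mul, add_zero]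
      apply Finset.sum_congr rfl
      intro j hj
      have h := Nat.choose_succ_right_eq p j
      rw [Nat.factorial_succ]
      calc (p - j) * (p.choose j * j.factorial * stirling n j)
          = p.choose j * (p - j) * (j.factorial * stirling n j) := by ring
        _ = p.choose (j+1) * (j+1) * (j.factorial * stirling n j) := by rw [← h]
        _ = p.choose (j+1) * ((j+1) * j.factorial) * stirling n j := by ring
    rw [Finset.sum_range_succ']
    simp only [stirling, Nat.choose_zero_right, Nat.factorial_zero, one_mul, mul_one, mul_zero,
      add_zero]
    calc ∑ j ∈ Finset.range p,
          p.choose (j+1) * (j+1).factorial * ((j+1) * stirling n (j+1) + stirling n j)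
        = ∑ j ∈ Finset.range p,
          ((j+1) * (p.choose (j+1) * (j+1).factorial * stirling n (j+1))
            + p.choose (j+1) * (j+1).factorial * stirling n j) := by
          apply Finset.sum_congr rfl; intro j _; ring
      _ = (∑ j ∈ Finset.range p, (j+1) * (p.choose (j+1) * (j+1).factorial * stirling n (j+1)))
            + ∑ j ∈ Finset.range p, p.choose (j+1) * (j+1).factorial * stirling n j :=
          Finset.sum_add_distrib
      _ = (∑ k ∈ Finset.range (p+1), k * (p.choose k * k.factorial * stirling n k))
            + ∑ k ∈ Finset.range (p+1), (p - k) * (p.choose k * k.factorial * stirling n k) := by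
          rw [hA, hB]
      _ = ∑ k ∈ Finset.range (p+1),
            (k * (p.choose k * k.factorial * stirling n k)
              + (p - k) * (p.choose k * k.factorial * stirling n k)) :=
          Finset.sum_add_distrib.symm
      _ = ∑ k ∈ Finset.range (p+1), p * (p.choose k * k.factorial * stirling n k) := by
          apply Finset.sum_congr rfl; intro k hk
          have : k ≤ p := Nat.lt_succ_iff.mp (Finset.mem_range.mp hk)
          rw [← add_mul]
          congr 1
          omega
      _ = p * p ^ n := by rw [← Finset.mul_sum, ih]
      _ = p ^ (n + 1) := (pow_succ' p n).symm

lemma stirling_upper (n p : ℕ) : p.factorial * stirling n p ≤ p ^ n := by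
  rw [← stirling_key n p]
  have h := Finset.single_le_sum
    (f := fun k => p.choose k * k.factorial * stirling n k)
    (fun i _ => Nat.zero_le _) (Finset.self_mem_range_succ p)
  simpa using h

lemma stirling_lower (n q : ℕ) :
    (q + 1) ^ n ≤ (q + 1).factorial * stirling n (q + 1) + (q + 1) * q ^ n := by
  rw [← stirling_key n (q + 1), Finset.sum_range_succ]
  simp only [Nat.choose_self, one_mul]
  have : ∑ k ∈ Finset.range (q + 1), (q+1).choose k * k.factorial * stirling n k
      ≤ (q + 1) * q ^ n := by
    rw [← stirling_key n q, Finset.mul_sum]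
    apply Finset.sum_le_sum
    intro k hk
    have hk' : k ≤ q := Nat.lt_succ_iff.mp (Finset.mem_range.mp hk)
    have h1 : q.choose k * (q + 1) = (q+1).choose k * (q + 1 - k) := Nat.choose_mul_succ_eq q k
    have h2 : (q+1).choose k ≤ (q + 1) * q.choose k := by
      have h3 : 1 ≤ q + 1 - k := by omega
      calc (q+1).choose k ≤ (q+1).choose k * (q + 1 - k) :=
            Nat.le_mul_of_pos_right _ h3
        _ = q.choose k * (q + 1) := h1.symm
        _ = (q + 1) * q.choose k := mul_comm _ _
    calc (q+1).choose k * k.factorial * stirling n k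
        ≤ (q + 1) * q.choose k * k.factorial * stirling n k := by
          exact Nat.mul_le_mul_right _ (Nat.mul_le_mul_right _ h2)
      _ = (q + 1) * (q.choose k * k.factorial * stirling n k) := by ring
  omega

theorem stmt0 (n p : ℕ) (hn : 1 ≤ n) (hp : 1 ≤ p) (hpn : p ≤ n) :
    (p : ℝ) ^ n / (Nat.factorial p : ℝ) - ((p : ℝ) - 1) ^ n / (Nat.factorial (p - 1) : ℝ)
        ≤ (stirling n p : ℝ) ∧
      (stirling n p : ℝ) ≤ (p : ℝ) ^ n / (Nat.factorial p : ℝ) := by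
  obtain ⟨q, rfl⟩ : ∃ q, p = q + 1 := ⟨p - 1, (Nat.succ_pred_eq_of_pos hp).symm⟩
  have hfpos : (0 : ℝ) < ((q+1).factorial : ℝ) := by positivity
  constructor
  · have h := stirling_lower n q
    have hR : ((q+1 : ℕ) : ℝ) ^ n ≤ ((q+1).factorial : ℝ) * (stirling n (q+1) : ℝ)
        + ((q+1 : ℕ) : ℝ) * (q : ℝ) ^ n := by exact_mod_cast h
    have hq1 : ((q+1 : ℕ) : ℝ) - 1 = (q : ℝ) := by push_cast; ring
    have hsub : (q + 1 : ℕ) - 1 = q := by omega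
    rw [hq1, hsub]
    have hqfpos : (0 : ℝ) < (q.factorial : ℝ) := by positivity
    have e : ((q : ℝ)) ^ n / (q.factorial : ℝ)
        = (((q : ℝ) + 1) * (q : ℝ) ^ n) / ((q+1).factorial : ℝ) := by
      rw [Nat.factorial_succ]
      push_cast
      rw [mul_div_mul_left]
      positivity
    push_cast at e hR ⊢
    rw [e, div_sub_div_same, div_le_iff₀ hfpos]
    nlinarith [hR]
  · rw [le_div_iff₀ hfpos]
    have h := stirling_upper n (q+1)
    have : (stirling n (q+1) : ℝ) * ((q+1).factorial : ℝ) ≤ ((q+1 : ℕ) : ℝ) ^ n := by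
      exact_mod_cast (mul_comm ((q+1).factorial) (stirling n (q+1)) ▸ h)
    push_cast at this ⊢
    linarith
end

section
/- The number of equivalence classes of and/or trees of size n labelled with at most k variables equals Cat(n) · Σ_{p=1}^{k} S(n,p) · 2^{2n−1−p}, where Cat(n) = (1/n)·C(2n−2, n−1) is the number of binary plane trees with n leaves. Equivalently, the number of ways to assign labels to an ordered sequence of n leaves, up to renaming of variables and global consistency of literal signs within variable classes, times the number of connective-labelled tree shapes, gives this count. -/
/-- Tree structures: binary plane trees whose internal nodes carry a connective (∧ or ∨,
encoded as a `Bool`) and whose leaves are unlabelled. -/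
inductive Shape
  | leaf : Shape
  | node : Bool → Shape → Shape → Shape

/-- Number of leaves of a tree structure. -/
def Shape.leaves : Shape → ℕ
  | .leaf => 1
  | .node _ l r => l.leaves + r.leaves

/-- An and/or tree of size `n` labelled with (at most) `k` variables: a connective-labelled
tree structure with `n` leaves together with a labelling of its leaves (in left-to-right
order) by literals, i.e. pairs (variable, polarity). -/
structure LTree (n k : ℕ) where
  shape : Shape
  hsize : shape.leaves = n
  lab : Fin n → Fin k × Bool

/-- Two labelled trees are equivalent if they have the same tree structure, two leaves carry
the same variable in one iff they do in the other, and two leaves carry the same literal in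
one iff they do in the other. -/
def treeSetoid (n k : ℕ) : Setoid (LTree n k) where
  r t s := t.shape = s.shape ∧
    (∀ i j, (t.lab i).1 = (t.lab j).1 ↔ (s.lab i).1 = (s.lab j).1) ∧
    (∀ i j, t.lab i = t.lab j ↔ s.lab i = s.lab j)
  iseqv := ⟨fun _ => ⟨rfl, fun _ _ => Iff.rfl, fun _ _ => Iff.rfl⟩,
    fun h => ⟨h.1.symm, fun i j => (h.2.1 i j).symm, fun i j => (h.2.2 i j).symm⟩,
    fun h1 h2 => ⟨h1.1.trans h2.1, fun i j => (h1.2.1 i j).trans (h2.2.1 i j),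
      fun i j => (h1.2.2 i j).trans (h2.2.2 i j)⟩⟩

/-!
A class of labelled trees is determined by its tree structure and by the class of its leaf
labelling, independently. There are `2^(n-1) Cat(n)` connective-labelled tree structures
with `n` leaves. Every class of labellings contains exactly one canonical labelling, in which
the first occurrence of each variable is positive and uses the least variable not used before;
a canonical labelling with `p` variables amounts to a partition of the leaves into `p` blocks
together with a sign for each leaf other than the first of its block. Splitting off the last
leaf gives the Stirling recursion for their number `S(n,p) 2^(n-p)`.
-/

open Finset

lemma stirling_eq_stirlingSecond : stirling = Nat.stirlingSecond := by
  funext n p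
  induction n generalizing p with
  | zero => cases p <;> rfl
  | succ n ih => cases p <;> simp [stirling, Nat.stirlingSecond_succ_succ, ih]

lemma catalan_pos (n : ℕ) : 0 < catalan n := by
  rw [catalan_eq_centralBinom_div]
  exact Nat.div_pos (Nat.le_of_dvd n.centralBinom_pos n.succ_dvd_centralBinom) n.succ_pos

lemma Finset.card_image_eq_card_image_of_iff {α β γ : Type*} [DecidableEq β] [DecidableEq γ]
    {s : Finset α} {u : α → β} {v : α → γ}
    (h : ∀ a ∈ s, ∀ b ∈ s, u a = u b ↔ v a = v b) :
    #(s.image u) = #(s.image v) := by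
  set w : α → β × γ := fun a => (u a, v a)
  have hfst : Set.InjOn Prod.fst (s.image w : Set (β × γ)) := by
    simp only [Set.InjOn, coe_image, Set.forall_mem_image]
    exact fun a ha b hb hab => Prod.ext hab ((h a ha b hb).mp hab)
  have hsnd : Set.InjOn Prod.snd (s.image w : Set (β × γ)) := by
    simp only [Set.InjOn, coe_image, Set.forall_mem_image]
    exact fun a ha b hb hab => Prod.ext ((h a ha b hb).mpr hab) hab
  calc #(s.image u) = #((s.image w).image Prod.fst) := by rw [image_image]; rfl
    _ = #((s.image w).image Prod.snd) := by
      rw [card_image_of_injOn hfst, card_image_of_injOn hsnd]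
    _ = #(s.image v) := by rw [image_image]; rfl

namespace Shape

lemma one_le_leaves : ∀ s : Shape, 1 ≤ s.leaves
  | leaf => le_rfl
  | node _ l _ => (one_le_leaves l).trans (Nat.le_add_right _ _)

lemma leaves_eq_one_iff {s : Shape} : s.leaves = 1 ↔ s = leaf := by
  cases s with
  | leaf => simp [leaves]
  | node _ l r =>
    simp only [leaves, reduceCtorEq, iff_false]
    have := l.one_le_leaves
    have := r.one_le_leaves
    omega

def nodeEquiv (n : ℕ) : {s : Shape // s.leaves = n + 2} ≃
    Σ i : Fin (n + 1),
      Bool × {s : Shape // s.leaves = i + 1} × {s : Shape // s.leaves = n - i + 1} where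
  toFun
    | ⟨leaf, h⟩ => absurd h (by simp [leaves])
    | ⟨node b l r, h⟩ =>
      have := l.one_le_leaves
      have := r.one_le_leaves
      have h : l.leaves + r.leaves = n + 2 := h
      ⟨⟨l.leaves - 1, by omega⟩, b, ⟨l, by simp only; omega⟩,
        ⟨r, by simp only; omega⟩⟩
  invFun := fun ⟨i, b, l, r⟩ => ⟨node b l r, by simp only [leaves, l.2, r.2]; omega⟩
  left_inv
    | ⟨leaf, h⟩ => absurd h (by simp [leaves])
    | ⟨node b l r, h⟩ => rfl
  right_inv := by
    rintro ⟨i, b, ⟨l, hl⟩, ⟨r, hr⟩⟩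
    obtain ⟨i, hi⟩ := i
    obtain rfl : i = l.leaves - 1 := by simp only at hl; omega
    rfl

lemma card_leaves_eq (n : ℕ) :
    Nat.card {s : Shape // s.leaves = n + 1} = 2 ^ n * catalan n := by
  induction n using Nat.strong_induction_on with | _ n ih =>
  cases n with
  | zero =>
    simp only [zero_add, leaves_eq_one_iff, pow_zero, catalan_zero]
    exact Nat.card_unique
  | succ n =>
    have hfin : ∀ m < n + 1, Finite {s : Shape // s.leaves = m + 1} := fun m hm =>
      Nat.finite_of_card_ne_zero (by rw [ih m hm]; have := catalan_pos m; positivity)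
    have (i : Fin (n + 1)) : Finite
        (Bool × {s : Shape // s.leaves = i + 1} × {s : Shape // s.leaves = n - i + 1}) := by
      have := hfin i i.2
      have := hfin (n - i) (by omega)
      infer_instance
    rw [Nat.card_congr (nodeEquiv n), Nat.card_sigma, catalan_succ, mul_sum]
    refine sum_congr rfl fun i _ => ?_
    rw [Nat.card_prod, Nat.card_prod, Nat.card_eq_fintype_card (α := Bool), Fintype.card_bool,
      ih i (by omega), ih (n - i) (by omega)]
    have hpow : 2 ^ (n + 1) = 2 * (2 ^ (i : ℕ) * 2 ^ (n - i)) := by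
      rw [← pow_add, ← pow_succ']
      congr 1
      omega
    rw [hpow]
    ring

end Shape

section Labelling

variable {n k : ℕ}

def usedVars (f : Fin n → Fin k × Bool) (m : ℕ) : Finset (Fin k) :=
  (univ.filter fun j : Fin n => (j : ℕ) < m).image fun j => (f j).1

def IsCanonical (f : Fin n → Fin k × Bool) : Prop :=
  ∀ i : Fin n, (f i).1 ∉ usedVars f i → ((f i).1 : ℕ) = #(usedVars f i) ∧ (f i).2 = true

def numVars (f : Fin n → Fin k × Bool) : ℕ := #(usedVars f n)

def SameKernels (f g : Fin n → Fin k × Bool) : Prop :=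
  (∀ i j, (f i).1 = (f j).1 ↔ (g i).1 = (g j).1) ∧ ∀ i j, f i = f j ↔ g i = g j

lemma SameKernels.symm {f g : Fin n → Fin k × Bool} (h : SameKernels f g) : SameKernels g f :=
  ⟨fun i j => (h.1 i j).symm, fun i j => (h.2 i j).symm⟩

lemma SameKernels.trans {f g h : Fin n → Fin k × Bool} (hfg : SameKernels f g)
    (hgh : SameKernels g h) : SameKernels f h :=
  ⟨fun i j => (hfg.1 i j).trans (hgh.1 i j), fun i j => (hfg.2 i j).trans (hgh.2 i j)⟩

variable {f : Fin n → Fin k × Bool}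

lemma mem_usedVars {m : ℕ} {v : Fin k} :
    v ∈ usedVars f m ↔ ∃ j : Fin n, (j : ℕ) < m ∧ (f j).1 = v := by
  simp [usedVars]

lemma usedVars_zero : usedVars f 0 = ∅ := by
  simp [usedVars]

lemma usedVars_succ {m : ℕ} (hm : m < n) :
    usedVars f (m + 1) = insert (f ⟨m, hm⟩).1 (usedVars f m) := by
  ext v
  simp only [mem_usedVars, mem_insert]
  constructor
  · rintro ⟨j, hj, rfl⟩
    obtain hj | hj := Nat.lt_succ_iff_lt_or_eq.mp hj
    · exact .inr ⟨j, hj, rfl⟩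
    · obtain rfl : j = ⟨m, hm⟩ := Fin.ext hj
      exact .inl rfl
  · rintro (rfl | ⟨j, hj, rfl⟩)
    exacts [⟨_, m.lt_succ_self, rfl⟩, ⟨j, by omega, rfl⟩]

lemma card_usedVars_lt_card_usedVars {a b : Fin n} (ha : (f a).1 ∉ usedVars f a) (hab : a < b) :
    #(usedVars f a) < #(usedVars f b) := by
  have hsub : usedVars f a ⊆ usedVars f b := fun v hv => by
    obtain ⟨j, hj, rfl⟩ := mem_usedVars.mp hv
    exact mem_usedVars.mpr ⟨j, hj.trans hab, rfl⟩
  exact card_lt_card ((ssubset_iff_of_subset hsub).mpr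
    ⟨(f a).1, mem_usedVars.mpr ⟨a, hab, rfl⟩, ha⟩)

lemma IsCanonical.mem_usedVars_iff (hf : IsCanonical f) {m : ℕ} (hm : m ≤ n) {v : Fin k} :
    v ∈ usedVars f m ↔ (v : ℕ) < #(usedVars f m) := by
  induction m with
  | zero => simp [usedVars_zero]
  | succ m ih =>
    rw [usedVars_succ (by omega)]
    by_cases hx : (f ⟨m, by omega⟩).1 ∈ usedVars f m
    · rw [insert_eq_of_mem hx, ih (by omega)]
    · have hx' : ((f ⟨m, _⟩).1 : ℕ) = #(usedVars f m) := (hf _ hx).1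
      rw [card_insert_of_notMem hx, mem_insert, ih (by omega), Fin.ext_iff, hx']
      omega

lemma IsCanonical.mem_usedVars_iff_lt_numVars (hf : IsCanonical f) {v : Fin k} :
    v ∈ usedVars f n ↔ (v : ℕ) < numVars f :=
  hf.mem_usedVars_iff le_rfl

lemma usedVars_snoc (g : Fin n → Fin k × Bool) (x : Fin k × Bool) {m : ℕ} (hm : m ≤ n) :
    usedVars (Fin.snoc g x : Fin (n + 1) → Fin k × Bool) m = usedVars g m := by
  ext v
  simp only [mem_usedVars]
  constructor
  · rintro ⟨j, hj, rfl⟩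
    refine ⟨⟨j, by omega⟩, hj, ?_⟩
    rw [← Fin.snoc_castSucc (α := fun _ => Fin k × Bool) x g]
    rfl
  · rintro ⟨j, hj, rfl⟩
    exact ⟨j.castSucc, hj, by rw [Fin.snoc_castSucc]⟩

lemma numVars_snoc (g : Fin n → Fin k × Bool) (x : Fin k × Bool) :
    numVars (Fin.snoc g x : Fin (n + 1) → Fin k × Bool) = #(insert x.1 (usedVars g n)) := by
  rw [numVars, usedVars_succ n.lt_succ_self, usedVars_snoc g x le_rfl]
  simp [Fin.snoc]

lemma isCanonical_snoc_iff {g : Fin n → Fin k × Bool} {x : Fin k × Bool} :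
    IsCanonical (Fin.snoc g x : Fin (n + 1) → Fin k × Bool) ↔
      IsCanonical g ∧ (x.1 ∉ usedVars g n → (x.1 : ℕ) = numVars g ∧ x.2 = true) := by
  rw [IsCanonical, Fin.forall_fin_succ']
  simp only [Fin.snoc_castSucc, Fin.snoc_last, Fin.val_castSucc, Fin.val_last, numVars,
    usedVars_snoc g x, Fin.is_le', le_rfl]
  rfl

lemma numVars_snoc_of_mem {g : Fin n → Fin k × Bool} {x : Fin k × Bool}
    (hx : x.1 ∈ usedVars g n) :
    numVars (Fin.snoc g x : Fin (n + 1) → Fin k × Bool) = numVars g := by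
  rw [numVars_snoc, insert_eq_of_mem hx, numVars]

lemma numVars_snoc_of_notMem {g : Fin n → Fin k × Bool} {x : Fin k × Bool}
    (hx : x.1 ∉ usedVars g n) :
    numVars (Fin.snoc g x : Fin (n + 1) → Fin k × Bool) = numVars g + 1 := by
  rw [numVars_snoc, card_insert_of_notMem hx, numVars]

lemma IsCanonical.init {f : Fin (n + 1) → Fin k × Bool} (hf : IsCanonical f) :
    IsCanonical (Fin.init f) :=
  (isCanonical_snoc_iff.mp (by rwa [Fin.snoc_init_self])).1

lemma one_le_numVars (f : Fin (n + 1) → Fin k × Bool) : 1 ≤ numVars f :=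
  card_pos.mpr ⟨_, mem_usedVars.mpr ⟨0, n.succ_pos, rfl⟩⟩

lemma card_usedVars_lt_of_notMem {m : ℕ} {v : Fin k} (hv : v ∉ usedVars f m) :
    #(usedVars f m) < k := by
  simpa using card_lt_univ_of_notMem hv

variable (f) in
noncomputable def firstOcc (i : Fin n) : Fin n :=
  (univ.filter fun j => (f j).1 = (f i).1).min' ⟨i, by simp⟩

lemma fst_firstOcc (i : Fin n) : (f (firstOcc f i)).1 = (f i).1 := by
  simpa [firstOcc] using (univ.filter fun j => (f j).1 = (f i).1).min'_mem ⟨i, by simp⟩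

lemma firstOcc_le {i j : Fin n} (h : (f j).1 = (f i).1) : firstOcc f i ≤ j :=
  min'_le _ j (by simp [h])

lemma firstOcc_congr {i j : Fin n} (h : (f i).1 = (f j).1) : firstOcc f i = firstOcc f j := by
  simp only [firstOcc, h]

lemma fst_firstOcc_notMem_usedVars (i : Fin n) :
    (f (firstOcc f i)).1 ∉ usedVars f (firstOcc f i) := by
  rw [fst_firstOcc, mem_usedVars]
  rintro ⟨j, hj, he⟩
  exact (firstOcc_le he).not_gt hj

lemma firstOcc_eq_self {i : Fin n} (h : (f i).1 ∉ usedVars f i) : firstOcc f i = i :=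
  (firstOcc_le rfl).antisymm <| not_lt.mp fun hlt =>
    h (mem_usedVars.mpr ⟨_, hlt, fst_firstOcc i⟩)

variable (f) in
/-- Each variable is renamed to the number of distinct variables occurring before its first
occurrence, and each literal is made positive iff it agrees with that first occurrence. -/
noncomputable def canonize (i : Fin n) : Fin k × Bool :=
  (⟨#(usedVars f (firstOcc f i)), card_usedVars_lt_of_notMem (fst_firstOcc_notMem_usedVars i)⟩,
    (f i).2 == (f (firstOcc f i)).2)

lemma canonize_fst_eq_iff (i j : Fin n) :
    (canonize f i).1 = (canonize f j).1 ↔ (f i).1 = (f j).1 := by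
  refine ⟨fun h => ?_, fun h => by simp only [canonize, firstOcc_congr h]⟩
  have hcard : #(usedVars f (firstOcc f i)) = #(usedVars f (firstOcc f j)) := congrArg Fin.val h
  have hocc : firstOcc f i = firstOcc f j := by
    by_contra hne
    obtain hlt | hlt := lt_or_gt_of_ne hne
    · exact (card_usedVars_lt_card_usedVars (fst_firstOcc_notMem_usedVars i) hlt).ne hcard
    · exact (card_usedVars_lt_card_usedVars (fst_firstOcc_notMem_usedVars j) hlt).ne' hcard
  rw [← fst_firstOcc i, ← fst_firstOcc j, hocc]

lemma canonize_eq_iff (i j : Fin n) : canonize f i = canonize f j ↔ f i = f j := by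
  rw [Prod.ext_iff, Prod.ext_iff, canonize_fst_eq_iff]
  refine and_congr_right fun h => ?_
  simp only [canonize, firstOcc_congr h]
  cases (f i).2 <;> cases (f j).2 <;> cases (f (firstOcc f j)).2 <;> decide

variable (f) in
lemma sameKernels_canonize : SameKernels (canonize f) f :=
  ⟨canonize_fst_eq_iff, canonize_eq_iff⟩

variable (f) in
lemma isCanonical_canonize : IsCanonical (canonize f) := by
  intro i hi
  have hfresh : (f i).1 ∉ usedVars f i := fun hmem => hi <| by
    obtain ⟨j, hj, he⟩ := mem_usedVars.mp hmem
    exact mem_usedVars.mpr ⟨j, hj, (canonize_fst_eq_iff j i).mpr he⟩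
  refine ⟨?_, by simp [canonize, firstOcc_eq_self hfresh]⟩
  simp only [canonize, firstOcc_eq_self hfresh]
  exact card_image_eq_card_image_of_iff fun a _ b _ => (canonize_fst_eq_iff a b).symm

/-- Two canonical labellings with the same kernels agree: by induction along the leaves, a
fresh variable is forced by canonicity, and a repeated one by the kernels. -/
lemma IsCanonical.eq_of_sameKernels {g : Fin n → Fin k × Bool} (hf : IsCanonical f)
    (hg : IsCanonical g) (h : SameKernels f g) : f = g := by
  funext i
  induction i using WellFoundedLT.induction with | _ i ih =>
  have hused : usedVars f i = usedVars g i := by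
    simp only [usedVars]
    exact image_congr fun j hj => by rw [ih j (by simpa using hj)]
  by_cases hrep : (f i).1 ∈ usedVars f i
  · obtain ⟨j, hj, he⟩ := mem_usedVars.mp hrep
    have hsign : (f j).2 = (f i).2 ↔ (g j).2 = (g i).2 := by
      simpa [Prod.ext_iff, he, (h.1 j i).mp he] using h.2 j i
    refine Prod.ext (by rw [← he, ih j hj, (h.1 j i).mp he]) ?_
    rw [ih j hj] at hsign
    have bool_eq : ∀ a b c : Bool, (c = a ↔ c = b) → a = b := by decide
    exact bool_eq _ _ _ hsign
  · have hgfresh : (g i).1 ∉ usedVars g i := by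
      rw [← hused, mem_usedVars]
      rintro ⟨j, hj, he⟩
      exact hrep (mem_usedVars.mpr ⟨j, hj, (h.1 j i).mpr (by rw [← ih j hj, he])⟩)
    obtain ⟨hf1, hf2⟩ := hf i hrep
    obtain ⟨hg1, hg2⟩ := hg i hgfresh
    exact Prod.ext (Fin.ext (by rw [hf1, hg1, hused])) (hf2.trans hg2.symm)

lemma canonize_eq_canonize_of_sameKernels {g : Fin n → Fin k × Bool} (h : SameKernels f g) :
    canonize f = canonize g :=
  (isCanonical_canonize f).eq_of_sameKernels (isCanonical_canonize g)
    (((sameKernels_canonize f).trans h).trans (sameKernels_canonize g).symm)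

lemma IsCanonical.canonize_eq (hf : IsCanonical f) : canonize f = f :=
  (isCanonical_canonize f).eq_of_sameKernels hf (sameKernels_canonize f)

end Labelling

abbrev CanonicalLabelling (n k p : ℕ) : Type :=
  {f : Fin n → Fin k × Bool // IsCanonical f ∧ numVars f = p}

noncomputable def canonicalSnocEquiv (n : ℕ) {k q : ℕ} (hq : q < k) :
    CanonicalLabelling (n + 1) k (q + 1) ≃
      CanonicalLabelling n k (q + 1) × (Fin (q + 1) × Bool) ⊕ CanonicalLabelling n k q where
  toFun f :=
    if h : (f.1 (Fin.last n)).1 ∈ usedVars (Fin.init f.1) n then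
      have hnum : numVars (Fin.init f.1) = q + 1 := by
        have := numVars_snoc_of_mem h
        rwa [Fin.snoc_init_self, f.2.2, eq_comm] at this
      .inl (⟨Fin.init f.1, f.2.1.init, hnum⟩,
        (⟨(f.1 (Fin.last n)).1,
          (f.2.1.init.mem_usedVars_iff_lt_numVars.mp h).trans_eq hnum⟩,
          (f.1 (Fin.last n)).2))
    else
      .inr ⟨Fin.init f.1, f.2.1.init, by
        have := numVars_snoc_of_notMem h
        rw [Fin.snoc_init_self, f.2.2] at this
        omega⟩
  invFun
    | .inl (g, v, b) =>
      have hv : (Fin.castLE hq v) ∈ usedVars g.1 n :=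
        g.2.1.mem_usedVars_iff_lt_numVars.mpr (by simpa [g.2.2] using v.isLt)
      ⟨Fin.snoc g.1 (Fin.castLE hq v, b),
        isCanonical_snoc_iff.mpr ⟨g.2.1, fun h => absurd hv h⟩,
        (numVars_snoc_of_mem hv).trans g.2.2⟩
    | .inr g =>
      have hv : (⟨q, hq⟩ : Fin k) ∉ usedVars g.1 n := by
        simp [g.2.1.mem_usedVars_iff_lt_numVars, g.2.2]
      ⟨Fin.snoc g.1 (⟨q, hq⟩, true),
        isCanonical_snoc_iff.mpr ⟨g.2.1, fun _ => ⟨g.2.2.symm, rfl⟩⟩,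
        by rw [numVars_snoc_of_notMem hv, g.2.2]⟩
  left_inv := by
    rintro ⟨f, hf, hnum⟩
    by_cases h : (f (Fin.last n)).1 ∈ usedVars (Fin.init f) n
    · simp only [dif_pos h]
      exact Subtype.ext (Fin.snoc_init_self f)
    · simp only [dif_neg h]
      have hinit := numVars_snoc_of_notMem h
      rw [Fin.snoc_init_self, hnum] at hinit
      obtain ⟨hvar, hsign⟩ := (isCanonical_snoc_iff.mp (by rwa [Fin.snoc_init_self])).2 h
      have hlast : ((⟨q, hq⟩, true) : Fin k × Bool) = f (Fin.last n) :=
        Prod.ext (Fin.ext (by simp only [hvar]; omega)) hsign.symm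
      exact Subtype.ext ((congrArg (Fin.snoc (Fin.init f)) hlast).trans (Fin.snoc_init_self f))
  right_inv := by
    rintro (⟨g, v, b⟩ | g)
    · have hv : (Fin.castLE hq v) ∈ usedVars g.1 n :=
        g.2.1.mem_usedVars_iff_lt_numVars.mpr (by simpa [g.2.2] using v.isLt)
      simp [Fin.init_snoc, hv]
    · simp [Fin.init_snoc, g.2.1.mem_usedVars_iff_lt_numVars, g.2.2]

lemma card_canonicalLabelling (n : ℕ) {k p : ℕ} (hp : p ≤ k) :
    Nat.card (CanonicalLabelling n k p) = stirling n p * 2 ^ (n - p) := by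
  rw [stirling_eq_stirlingSecond]
  induction n generalizing p with
  | zero =>
    have hnum (f : Fin 0 → Fin k × Bool) : IsCanonical f ∧ numVars f = 0 :=
      ⟨fun i => i.elim0, by simp [numVars, usedVars]⟩
    cases p with
    | zero =>
      have : Nonempty (CanonicalLabelling 0 k 0) := ⟨⟨finZeroElim, hnum _⟩⟩
      simp [Nat.card_unique]
    | succ p =>
      have : IsEmpty (CanonicalLabelling 0 k (p + 1)) :=
        ⟨fun f => by simpa [(hnum f.1).2] using f.2.2⟩
      simp
  | succ n ih =>
    cases p with
    | zero =>
      have : IsEmpty (CanonicalLabelling (n + 1) k 0) :=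
        ⟨fun f => by simpa [f.2.2] using one_le_numVars f.1⟩
      simp
    | succ q =>
      rw [Nat.card_congr (canonicalSnocEquiv n hp), Nat.card_sum, Nat.card_prod, Nat.card_prod,
        Nat.card_eq_fintype_card (α := Fin (q + 1)), Nat.card_eq_fintype_card (α := Bool),
        Fintype.card_fin, Fintype.card_bool, ih hp, ih (by omega), Nat.stirlingSecond_succ_succ,
        Nat.add_sub_add_right]
      obtain hlt | hle := lt_or_ge n (q + 1)
      · rw [Nat.stirlingSecond_eq_zero_of_lt hlt]
        ring
      · rw [show n - q = n - (q + 1) + 1 by omega, pow_succ]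
        ring

lemma card_isCanonical (n k : ℕ) :
    Nat.card {f : Fin (n + 1) → Fin k × Bool // IsCanonical f} =
      ∑ p ∈ Icc 1 k, stirling (n + 1) p * 2 ^ (n + 1 - p) := by
  let numVars' (f : {f : Fin (n + 1) → Fin k × Bool // IsCanonical f}) : Icc 1 k :=
    ⟨numVars f.1,
      mem_Icc.mpr ⟨one_le_numVars f.1, (card_le_univ _).trans_eq (Fintype.card_fin k)⟩⟩
  rw [← Nat.card_congr (Equiv.sigmaFiberEquiv numVars'), Nat.card_sigma,
    ← sum_coe_sort (Icc 1 k)]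
  refine sum_congr rfl fun p _ => ?_
  rw [← card_canonicalLabelling (n + 1) (mem_Icc.mp p.2).2]
  exact Nat.card_congr ((Equiv.subtypeEquivRight fun _ => Subtype.ext_iff).trans
    (Equiv.subtypeSubtypeEquivSubtypeInter _ fun f => numVars f = p))

noncomputable def treeQuotientEquiv (n k : ℕ) :
    Quotient (treeSetoid n k) ≃
      {s : Shape // s.leaves = n} × {f : Fin n → Fin k × Bool // IsCanonical f} where
  toFun := Quotient.lift
    (fun t => (⟨t.shape, t.hsize⟩, ⟨canonize t.lab, isCanonical_canonize _⟩))
    fun _ _ ⟨hshape, hker⟩ =>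
      Prod.ext (Subtype.ext hshape) (Subtype.ext (canonize_eq_canonize_of_sameKernels hker))
  invFun x := ⟦⟨x.1.1, x.1.2, x.2.1⟩⟧
  left_inv := Quotient.ind fun t => Quotient.sound ⟨rfl, sameKernels_canonize t.lab⟩
  right_inv x := Prod.ext rfl (Subtype.ext x.2.2.canonize_eq)

/-- The number of equivalence classes of and/or trees of size `n` labelled with at most `k`
variables equals `Cat(n) · Σ_{p=1}^{k} S(n,p) · 2^{2n−1−p}`,
where `Cat(n) = (1/n)·C(2n−2, n−1)`. -/
theorem stmt1 (n k : ℕ) (hn : 1 ≤ n) :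
    Nat.card (Quotient (treeSetoid n k)) =
      (Nat.choose (2 * n - 2) (n - 1) / n) *
        ∑ p ∈ Finset.Icc 1 k, stirling n p * 2 ^ (2 * n - 1 - p) := by
  obtain ⟨m, rfl⟩ : ∃ m, n = m + 1 := ⟨n - 1, by omega⟩
  have hcatalan : (2 * (m + 1) - 2).choose (m + 1 - 1) / (m + 1) = catalan m := by
    rw [catalan_eq_centralBinom_div, Nat.centralBinom]
    congr 2
  rw [Nat.card_congr (treeQuotientEquiv _ k), Nat.card_prod, Shape.card_leaves_eq,
    card_isCanonical, hcatalan, mul_sum, mul_sum]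
  refine sum_congr rfl fun p _ => ?_
  obtain hle | hlt := le_or_gt p (m + 1)
  · rw [show 2 * (m + 1) - 1 - p = m + (m + 1 - p) by omega, pow_add]
    ring
  · simp [stirling_eq_stirlingSecond, Nat.stirlingSecond_eq_zero_of_lt hlt]
end

section
/- Let x_n be the unique positive solution of ((x+1)/x)^n · 1/(2(x+1)) = 1 (for n large enough so that a solution exists). Then the sequence (x_n) is increasing for large n, tends to infinity, and satisfies x_n · ln x_n ~ n as n → ∞; consequently x_n ~ n/ln n. -/
/-!
Write the equation as `((x + 1) / x) ^ n = 2 * (x + 1)`. If `x_n ≤ c` then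
`(1 + 1/c) ^ n ≤ 2 * (c + 1)`, impossible for large `n`, so `x_n → ∞`; and if `x_{n+1} < x_n`,
the larger base `(x_{n+1} + 1) / x_{n+1}` raised to the power `n + 1` would exceed
`2 * (x_n + 1) * (x_n + 1) / x_n > 2 * (x_{n+1} + 1)`.
Taking logarithms, `n * log (1 + 1/x_n) = log (2 * (x_n + 1))`; since `x * log (1 + 1/x) → 1` and
`log (2 * (x + 1)) ~ log x`, this gives `x_n * log x_n ~ n`. Taking logarithms once more,
`log x_n ~ log x_n + log log x_n ~ log n`, and dividing gives `x_n ~ n / log n`.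
-/

open Filter Asymptotics Topology

theorem one_add_inv_pow_le_of_pow_eq {n : ℕ} {y c : ℝ} (hy : 0 < y) (hyc : y ≤ c)
    (h : ((y + 1) / y) ^ n = 2 * (y + 1)) : (1 + c⁻¹) ^ n ≤ 2 * (c + 1) :=
  calc (1 + c⁻¹) ^ n ≤ ((y + 1) / y) ^ n := by
        rw [add_div, div_self hy.ne', one_div]
        exact pow_le_pow_left₀ (by positivity [hy.trans_le hyc]) (by gcongr) n
    _ = 2 * (y + 1) := h
    _ ≤ 2 * (c + 1) := by linarith

theorem tendsto_atTop_of_pow_eq {x : ℕ → ℝ} (hpos : ∀ᶠ n in atTop, 0 < x n)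
    (h : ∀ᶠ n in atTop, ((x n + 1) / x n) ^ n = 2 * (x n + 1)) : Tendsto x atTop atTop := by
  refine tendsto_atTop.2 fun b => ?_
  set c := max b 1
  have hc : 0 < c := one_pos.trans_le (le_max_right b 1)
  have hgrow : Tendsto (fun n : ℕ => (1 + c⁻¹) ^ n) atTop atTop :=
    tendsto_pow_atTop_atTop_of_one_lt (lt_add_of_pos_right 1 (inv_pos.2 hc))
  filter_upwards [hpos, h, hgrow.eventually_gt_atTop (2 * (c + 1))] with n hxn hn hbig
  refine (le_max_left b 1).trans (le_of_not_gt fun hxc => ?_)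
  exact (one_add_inv_pow_le_of_pow_eq hxn hxc.le hn).not_gt hbig

theorem le_of_pow_eq_of_succ_pow_eq {n : ℕ} {a b : ℝ} (ha : 0 < a) (hb : 0 < b)
    (hna : ((a + 1) / a) ^ n = 2 * (a + 1)) (hnb : ((b + 1) / b) ^ (n + 1) = 2 * (b + 1)) :
    a ≤ b := by
  by_contra! hba
  have hbase : 1 < (a + 1) / a := by rw [one_lt_div ha]; linarith
  have hratio : (a + 1) / a < (b + 1) / b := by
    rw [div_lt_div_iff₀ ha hb]
    linarith
  have := calc 2 * (b + 1) < 2 * (a + 1) := by linarith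
    _ < 2 * (a + 1) * ((a + 1) / a) := lt_mul_of_one_lt_right (by linarith) hbase
    _ = ((a + 1) / a) ^ (n + 1) := by rw [pow_succ, hna]
    _ < ((b + 1) / b) ^ (n + 1) := by gcongr
    _ = 2 * (b + 1) := hnb
  exact lt_irrefl _ this

theorem tendsto_mul_log_add_one_div_self_atTop :
    Tendsto (fun y : ℝ => y * Real.log ((y + 1) / y)) atTop (𝓝 1) := by
  refine (Real.tendsto_mul_log_one_add_div_atTop 1).congr' ?_
  filter_upwards [eventually_gt_atTop 0] with y hy
  rw [add_div, div_self hy.ne', add_comm]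

theorem isEquivalent_log_two_mul_add_one_atTop :
    (fun y : ℝ => Real.log (2 * (y + 1))) ~[atTop] Real.log := by
  have hadd : (fun y : ℝ => y + 1) ~[atTop] id :=
    IsEquivalent.refl.add_const_of_norm_tendsto_atTop tendsto_norm_atTop_atTop
  refine ((hadd.log tendsto_id).const_add_of_norm_tendsto_atTop (c := Real.log 2)
    (tendsto_norm_atTop_atTop.comp Real.tendsto_log_atTop)).congr_left ?_
  filter_upwards [eventually_gt_atTop 0] with y hy
  rw [Real.log_mul two_ne_zero (by positivity)]

theorem isEquivalent_mul_log_of_mul_log_eq {α : Type*} {l : Filter α} {u t : α → ℝ}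
    (hu : Tendsto u l atTop)
    (h : ∀ᶠ a in l, t a * Real.log ((u a + 1) / u a) = Real.log (2 * (u a + 1))) :
    (fun a => u a * Real.log (u a)) ~[l] t := by
  have hlog : (fun a => u a * Real.log (2 * (u a + 1))) ~[l] fun a => u a * Real.log (u a) :=
    IsEquivalent.refl.mul (isEquivalent_log_two_mul_add_one_atTop.comp_tendsto hu)
  have hone : (fun a => u a * Real.log ((u a + 1) / u a)) ~[l] fun _ => (1 : ℝ) :=
    (isEquivalent_const_iff_tendsto one_ne_zero).2 (tendsto_mul_log_add_one_div_self_atTop.comp hu)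
  refine hlog.symm.trans (((IsEquivalent.refl (u := t)).mul hone).congr_left ?_ |>.congr_right ?_)
  · filter_upwards [h] with a ha
    simp only [Pi.mul_apply, ← ha]
    ring
  · exact EventuallyEq.of_eq (mul_one t)

theorem Asymptotics.IsEquivalent.div_log_of_mul_log {α : Type*} {l : Filter α} {u v : α → ℝ}
    (h : (fun a => u a * Real.log (u a)) ~[l] v) (hu : Tendsto u l atTop) :
    u ~[l] fun a => v a / Real.log (v a) := by
  have hlogu := Real.tendsto_log_atTop.comp hu
  have hv : Tendsto v l atTop := h.tendsto_atTop (hu.atTop_mul_atTop₀ hlogu)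
  have hloglog : (fun a => Real.log (Real.log (u a))) =o[l] fun a => Real.log (u a) :=
    Real.isLittleO_log_id_atTop.comp_tendsto hlogu
  have hlog : (fun a => Real.log (u a)) ~[l] fun a => Real.log (v a) := by
    refine (IsEquivalent.refl.add_isLittleO hloglog).symm.trans ((h.log hv).congr_left ?_)
    filter_upwards [hu.eventually_gt_atTop 1] with a ha
    rw [Real.log_mul (by linarith) (Real.log_pos ha).ne', Pi.add_apply]
  refine (h.div hlog).congr_left ?_
  filter_upwards [hu.eventually_gt_atTop 1] with a ha
  simp only [Pi.div_apply]
  rw [mul_div_cancel_right₀ _ (Real.log_pos ha).ne']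

theorem stmt6_general (x : ℕ → ℝ) (N : ℕ)
    (hpos : ∀ n ≥ N, 0 < x n)
    (hsol : ∀ n ≥ N, ((x n + 1) / x n) ^ n * (1 / (2 * (x n + 1))) = 1) :
    (∃ N', ∀ n ≥ N', x n ≤ x (n + 1)) ∧
      Tendsto x atTop atTop ∧
      (fun n => x n * Real.log (x n)) ~[atTop] (fun n => (n : ℝ)) ∧
      x ~[atTop] (fun n => (n : ℝ) / Real.log n) := by
  have key : ∀ n ≥ N, ((x n + 1) / x n) ^ n = 2 * (x n + 1) := fun n hn => by
    have h := hsol n hn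
    rwa [mul_one_div, div_eq_one_iff_eq (by linarith [hpos n hn])] at h
  have htop : Tendsto x atTop atTop :=
    tendsto_atTop_of_pow_eq (eventually_atTop.2 ⟨N, hpos⟩) (eventually_atTop.2 ⟨N, key⟩)
  have hlog : (fun n => x n * Real.log (x n)) ~[atTop] (fun n => (n : ℝ)) :=
    isEquivalent_mul_log_of_mul_log_eq htop <|
      eventually_atTop.2 ⟨N, fun n hn => by rw [← Real.log_pow, key n hn]⟩
  refine ⟨⟨N, fun n hn => ?_⟩, htop, hlog, hlog.div_log_of_mul_log htop⟩
  have hn' : n + 1 ≥ N := Nat.le_succ_of_le hn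
  exact le_of_pow_eq_of_succ_pow_eq (hpos n hn) (hpos _ hn') (key n hn) (key _ hn')

/-- Let `x_n` be, for large `n`, the unique positive solution of
`((x+1)/x)^n · 1/(2(x+1)) = 1`. Then `(x_n)` is increasing for large `n`, tends to
infinity, satisfies `x_n · ln x_n ~ n`, and consequently `x_n ~ n / ln n`. -/
theorem stmt6 (x : ℕ → ℝ) (N : ℕ)
    (hpos : ∀ n ≥ N, 0 < x n)
    (hsol : ∀ n ≥ N, ((x n + 1) / x n) ^ n * (1 / (2 * (x n + 1))) = 1)
    (huniq : ∀ n ≥ N, ∀ y : ℝ, 0 < y → ((y + 1) / y) ^ n * (1 / (2 * (y + 1))) = 1 → y = x n) :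
    (∃ N', ∀ n ≥ N', x n ≤ x (n + 1)) ∧
      Tendsto x atTop atTop ∧
      (fun n => x n * Real.log (x n)) ~[atTop] (fun n => (n : ℝ)) ∧
      x ~[atTop] (fun n => (n : ℝ) / Real.log n) :=
  stmt6_general x N hpos hsol
end

section
/- Let M_n = ⌊x_n⌋ where x_n solves n·ln(1+1/x) = ln 2 + ln(x+1). Then M_n ~ n/ln n as n → ∞. -/
/-!
Write `L t = log 2 + log (t + 1)`. Since `1 / (x + 1) ≤ log (1 + 1 / x) ≤ 1 / x`, the equation
`n log (1 + 1 / x) = L x` traps `n` between `x L x` and `(x + 1) L x`. Hence `x_n → ∞` and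
`n ~ x_n L x_n ~ x_n log x_n`. Taking logarithms, `log n ~ log x_n + log log x_n ~ log x_n`, so
`n / log n ~ x_n`, and the floor does not change the asymptotics.
-/

open Filter Asymptotics

open Real

lemma Real.inv_add_one_le_log_one_add_inv {x : ℝ} (hx : 0 < x) : (x + 1)⁻¹ ≤ log (1 + x⁻¹) := by
  have h := one_sub_inv_le_log_of_pos (show 0 < 1 + x⁻¹ by positivity)
  have e : 1 - (1 + x⁻¹)⁻¹ = (x + 1)⁻¹ := by field_simp; ring
  linarith

lemma Real.log_one_add_inv_le_inv {x : ℝ} (hx : 0 < x) : log (1 + x⁻¹) ≤ x⁻¹ := by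
  linarith [log_le_sub_one_of_pos (show 0 < 1 + x⁻¹ by positivity)]

lemma mul_le_and_le_add_one_mul_of_mul_log_one_add_inv_eq {n x c : ℝ} (hn : 0 ≤ n) (hx : 0 < x)
    (h : n * log (1 + x⁻¹) = c) : x * c ≤ n ∧ n ≤ (x + 1) * c := by
  have hlo : n * (x + 1)⁻¹ ≤ c :=
    h ▸ mul_le_mul_of_nonneg_left (inv_add_one_le_log_one_add_inv hx) hn
  have hhi : c ≤ n * x⁻¹ := h ▸ mul_le_mul_of_nonneg_left (log_one_add_inv_le_inv hx) hn
  rw [← div_eq_mul_inv] at hlo hhi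
  constructor
  · rwa [le_div_iff₀ hx, mul_comm] at hhi
  · rwa [div_le_iff₀ (by positivity), mul_comm] at hlo

lemma monotoneOn_add_one_mul_log_two_add_log_add_one :
    MonotoneOn (fun t ↦ (t + 1) * (log 2 + log (t + 1))) (Set.Ici 0) := by
  intro a (ha : 0 ≤ a) b (hb : 0 ≤ b) hab
  have : 0 ≤ log (a + 1) := log_nonneg (by linarith)
  have : 0 ≤ log 2 := log_nonneg one_le_two
  dsimp only
  gcongr

lemma Filter.Tendsto.atTop_of_le_monotoneOn {α β γ : Type*} [LinearOrder β] [Preorder γ]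
    [NoMaxOrder γ] {l : Filter α} {g : β → γ} {c : β} {u : α → γ} {x : α → β}
    (hu : Tendsto u l atTop) (hg : MonotoneOn g (Set.Ici c)) (hx : ∀ᶠ a in l, c ≤ x a)
    (hle : ∀ᶠ a in l, u a ≤ g (x a)) : Tendsto x l atTop := by
  refine tendsto_atTop.2 fun b ↦ ?_
  filter_upwards [hx, hle, hu.eventually_gt_atTop (g (max b c))] with a hxa hlea hgt
  by_contra! hlt
  have := hg hxa (le_max_right b c : c ≤ max b c) (hlt.le.trans (le_max_left b c))
  exact lt_irrefl _ (hgt.trans_le (hlea.trans this))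

section Asymptotics

variable {α : Type*} {l : Filter α}

lemma Asymptotics.IsEquivalent.of_le_of_le {u v w : α → ℝ} (hvu : v ≤ᶠ[l] u) (huw : u ≤ᶠ[l] w)
    (hwv : w ~[l] v) : u ~[l] v := by
  refine IsBigO.trans_isLittleO (IsBigO.of_bound' ?_) hwv
  filter_upwards [hvu, huw] with a h₁ h₂
  simp only [Pi.sub_apply, Real.norm_eq_abs]
  rw [abs_of_nonneg (by linarith), abs_of_nonneg (by linarith)]
  linarith

lemma isEquivalent_log_two_add_log_add_one :
    (fun t ↦ log 2 + log (t + 1)) ~[atTop] log := by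
  have hshift : (fun t : ℝ ↦ t + 1) ~[atTop] id :=
    IsEquivalent.refl.add_const_of_norm_tendsto_atTop tendsto_norm_atTop_atTop
  exact (hshift.log tendsto_id).const_add_of_norm_tendsto_atTop
    (tendsto_norm_atTop_atTop.comp tendsto_log_atTop)

lemma isEquivalent_log_mul_log : (fun t ↦ log (t * log t)) ~[atTop] log := by
  have hloglog : (fun t ↦ log (log t)) =o[atTop] log :=
    isLittleO_log_id_atTop.comp_tendsto tendsto_log_atTop
  refine (IsEquivalent.refl.add_isLittleO hloglog).congr_left ?_
  filter_upwards [eventually_gt_atTop 1] with t ht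
  exact (log_mul (by positivity) (log_pos ht).ne').symm

lemma Asymptotics.IsEquivalent.div_log {u v : α → ℝ}
    (huv : u ~[l] fun a ↦ v a * Real.log (v a)) (hv : Tendsto v l atTop) :
    v ~[l] fun a ↦ u a / Real.log (u a) := by
  have hvlogv : Tendsto (fun a ↦ v a * Real.log (v a)) l atTop :=
    hv.atTop_mul_atTop₀ (tendsto_log_atTop.comp hv)
  have hlog : (fun a ↦ Real.log (u a)) ~[l] fun a ↦ Real.log (v a) :=
    (huv.log hvlogv).trans (isEquivalent_log_mul_log.comp_tendsto hv)
  refine ((huv.div hlog).trans_eventuallyEq ?_).symm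
  filter_upwards [hv.eventually_gt_atTop 1] with a ha
  exact mul_div_cancel_right₀ _ (log_pos ha).ne'

end Asymptotics

/-- Let `M_n = ⌊x_n⌋` where `x_n` is the positive solution of
`n·ln(1+1/x) = ln 2 + ln(x+1)`. Then `M_n ~ n / ln n` as `n → ∞`. -/
theorem stmt7 (x : ℕ → ℝ) (M : ℕ → ℕ) (N : ℕ)
    (hpos : ∀ n ≥ N, 0 < x n)
    (hsol : ∀ n ≥ N, (n : ℝ) * Real.log (1 + 1 / x n) = Real.log 2 + Real.log (x n + 1))
    (hM : ∀ n ≥ N, M n = ⌊x n⌋₊) :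
    (fun n => (M n : ℝ)) ~[atTop] (fun n => (n : ℝ) / Real.log n) := by
  set L : ℝ → ℝ := fun t ↦ log 2 + log (t + 1)
  have hbounds : ∀ᶠ n in atTop, x n * L (x n) ≤ n ∧ n ≤ (x n + 1) * L (x n) := by
    filter_upwards [eventually_ge_atTop N] with n hn
    exact mul_le_and_le_add_one_mul_of_mul_log_one_add_inv_eq n.cast_nonneg (hpos n hn)
      (by simpa only [one_div] using hsol n hn)
  have hx : Tendsto x atTop atTop :=
    tendsto_natCast_atTop_atTop.atTop_of_le_monotoneOn
      monotoneOn_add_one_mul_log_two_add_log_add_one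
      ((eventually_ge_atTop N).mono fun n hn ↦ (hpos n hn).le) (hbounds.mono fun _ h ↦ h.2)
  have hshift : (fun n ↦ x n + 1) ~[atTop] x :=
    IsEquivalent.refl.add_const_of_norm_tendsto_atTop (tendsto_norm_atTop_atTop.comp hx)
  have hn : (fun n : ℕ ↦ (n : ℝ)) ~[atTop] fun n ↦ x n * log (x n) :=
    (IsEquivalent.of_le_of_le (hbounds.mono fun _ h ↦ h.1) (hbounds.mono fun _ h ↦ h.2)
      (hshift.mul IsEquivalent.refl)).trans
      (IsEquivalent.refl.mul (isEquivalent_log_two_add_log_add_one.comp_tendsto hx))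
  have hMx : (fun n ↦ (M n : ℝ)) ~[atTop] x := by
    refine (isEquivalent_nat_floor.comp_tendsto hx).congr_left ?_
    filter_upwards [eventually_ge_atTop N] with n hn
    simp [hM n hn]
  exact hMx.trans (hn.div_log hx)
end

section
/- Let (k_n) be an increasing integer sequence tending to infinity with k_n ≤ M_n for all large n, where M_n is the mode of p ↦ p^n/(p!·2^p). Let (δ_n) satisfy δ_n = o(k_n) and k_n·√(ln k_n)/√n = o(δ_n). Then Σ_{p=1}^{k_n} p^n/(p!·2^p) ~ Σ_{p=k_n−δ_n}^{k_n} p^n/(p!·2^p) as n → ∞; i.e. the sum is asymptotically concentrated on its last δ_n terms. -/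
open Filter Asymptotics

/-- The sequence `a_p^{(n)} = p^n / (p! · 2^p)`. -/
noncomputable def a (n p : ℕ) : ℝ := (p : ℝ) ^ n / ((Nat.factorial p : ℝ) * 2 ^ p)

open Finset
noncomputable def R (n p : ℕ) : ℝ := (((p : ℝ) + 1) / p) ^ n / (2 * ((p : ℝ) + 1))

lemma a_pos (n : ℕ) {p : ℕ} (hp : 1 ≤ p) : 0 < a n p := by
  have : (0:ℝ) < p := by exact_mod_cast hp
  have h2 : (0:ℝ) < (Nat.factorial p : ℝ) := by exact_mod_cast p.factorial_pos
  unfold a; positivity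

lemma R_pos (n : ℕ) {p : ℕ} (hp : 1 ≤ p) : 0 < R n p := by
  have : (0:ℝ) < p := by exact_mod_cast hp
  unfold R; positivity

lemma a_succ (n : ℕ) {p : ℕ} (hp : 1 ≤ p) : a n (p + 1) = a n p * R n p := by
  have hp0 : ((p:ℝ)) ≠ 0 := by
    have : (0:ℝ) < p := by exact_mod_cast hp
    exact this.ne'
  have hf : ((Nat.factorial p : ℝ)) ≠ 0 := by exact_mod_cast p.factorial_pos.ne'
  unfold a R
  rw [Nat.factorial_succ]
  push_cast
  rw [div_pow]
  field_simp
  ring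

lemma R_anti (n : ℕ) {p q : ℕ} (hp : 1 ≤ p) (hpq : p ≤ q) : R n q ≤ R n p := by
  have hp0 : (0:ℝ) < p := by exact_mod_cast hp
  have hq0 : (0:ℝ) < q := lt_of_lt_of_le hp0 (by exact_mod_cast hpq)
  have hpq' : (p:ℝ) ≤ q := by exact_mod_cast hpq
  unfold R
  apply div_le_div₀ (by positivity)
  · apply pow_le_pow_left₀ (by positivity)
    rw [div_le_div_iff₀ hq0 hp0]
    nlinarith
  · positivity
  · linarith

lemma one_le_R (n M : ℕ) (hM2 : 2 ≤ M) (hMn : M ≤ n)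
    (hmax : ∀ p, 1 ≤ p → p ≤ n → a n p ≤ a n M) {p : ℕ} (hp : 1 ≤ p) (hpM : p + 1 ≤ M) :
    1 ≤ R n p := by
  obtain ⟨m, rfl⟩ : ∃ m, M = m + 1 := ⟨M - 1, (Nat.succ_pred_eq_of_pos (by omega)).symm⟩
  have hm1 : 1 ≤ m := by omega
  have ham : a n m ≤ a n (m + 1) := hmax m hm1 (by omega)
  have hRm : 1 ≤ R n m := by
    have := a_succ n hm1
    have hap := a_pos n hm1
    nlinarith [this ▸ ham]
  exact le_trans hRm (R_anti n hp (by omega))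

lemma a_mono (n M : ℕ) (hM2 : 2 ≤ M) (hMn : M ≤ n)
    (hmax : ∀ p, 1 ≤ p → p ≤ n → a n p ≤ a n M) :
    ∀ q p, 1 ≤ p → p ≤ q → q ≤ M → a n p ≤ a n q := by
  intro q
  induction q with
  | zero => intro p h1 h2 _; omega
  | succ q ih =>
    intro p h1 h2 h3
    rcases Nat.eq_or_lt_of_le h2 with h | h
    · rw [h]
    · have hq1 : 1 ≤ q := by omega
      refine le_trans (ih p h1 (by omega) (by omega)) ?_
      rw [a_succ n hq1]
      nlinarith [a_pos n hq1, one_le_R n M hM2 hMn hmax hq1 h3]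

lemma decay (n q : ℕ) (hq : 1 ≤ q) (hR : ∀ p, 1 ≤ p → p ≤ q → R n q ≤ R n p) :
    ∀ m p, 1 ≤ p → p + m = q + 1 → a n p ≤ (R n q)⁻¹ ^ m * a n (q + 1) := by
  intro m
  induction m with
  | zero => intro p h1 h2; simp [show p = q + 1 by omega]
  | succ m ih =>
    intro p h1 h2
    have hpq : p ≤ q := by omega
    have hRq := R_pos n hq
    have hstep : a n p ≤ (R n q)⁻¹ * a n (p + 1) := by
      have h3 : a n p * R n q ≤ a n p * R n p :=
        mul_le_mul_of_nonneg_left (hR p h1 hpq) (a_pos n h1).le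
      rw [← a_succ n h1] at h3
      rw [le_inv_mul_iff₀ hRq, mul_comm]
      exact h3
    calc a n p ≤ (R n q)⁻¹ * a n (p + 1) := hstep
      _ ≤ (R n q)⁻¹ * ((R n q)⁻¹ ^ m * a n (q + 1)) := by
          apply mul_le_mul_of_nonneg_left (ih (p+1) (by omega) (by omega)) (by positivity)
      _ = (R n q)⁻¹ ^ (m + 1) * a n (q + 1) := by ring

lemma geom_tail {ρ : ℝ} (h0 : 0 ≤ ρ) (h1 : ρ < 1) (q : ℕ) :
    ∑ p ∈ Icc 1 q, ρ ^ (q + 1 - p) ≤ ρ / (1 - ρ) := by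
  have h2 : (0:ℝ) < 1 - ρ := by linarith
  have key : ∑ p ∈ Icc 1 q, ρ ^ (q + 1 - p) = ∑ i ∈ range q, ρ ^ (i + 1) := by
    rw [← Finset.Ico_add_one_right_eq_Icc, Finset.sum_Ico_eq_sum_range,
      ← Finset.sum_range_reflect (fun j => ρ ^ (j + 1)) q]
    apply Finset.sum_congr (by norm_num)
    intro i hi
    simp only [Finset.mem_range] at hi
    congr 1
    omega
  rw [key]
  have hgeom : ∑ i ∈ range q, ρ ^ (i + 1) = ρ * ∑ i ∈ range q, ρ ^ i := by
    rw [Finset.mul_sum]; exact Finset.sum_congr rfl fun i _ => by ring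
  rw [hgeom, div_eq_mul_inv]
  apply mul_le_mul_of_nonneg_left _ h0
  calc ∑ i ∈ range q, ρ ^ i = (1 - ρ ^ q) / (1 - ρ) := by
        rw [geom_sum_eq (by linarith) q]; rw [div_eq_div_iff (by linarith) (by linarith)]; ring
    _ ≤ 1 / (1 - ρ) := by gcongr; nlinarith [pow_nonneg h0 q]
    _ = (1 - ρ)⁻¹ := one_div _

set_option maxHeartbeats 1000000 in
lemma key (n kk M d : ℕ) {ε : ℝ} (hε : 0 < ε)
    (hn : 1 ≤ n) (hk4 : 4 ≤ kk) (hd1 : 1 ≤ d) (hdk : 2 * d ≤ kk) (hkM : kk ≤ M) (hMn : M ≤ n)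
    (hmax : ∀ p, 1 ≤ p → p ≤ n → a n p ≤ a n M)
    (hsq : (kk : ℝ) ^ 2 ≤ ε * n * (d : ℝ) ^ 2) :
    ∑ p ∈ Icc 1 (kk - d - 1), a n p ≤ ε * ∑ p ∈ Icc (kk - d) kk, a n p := by
  set q : ℕ := kk - d - 1 with hqdef
  have hq1 : 1 ≤ q := by omega
  have hqk : q + d + 1 = kk := by omega
  have hM2 : 2 ≤ M := by omega
  have hK4 : (4:ℝ) ≤ (kk:ℝ) := by exact_mod_cast hk4
  have hQ1 : (1:ℝ) ≤ (q:ℝ) := by exact_mod_cast hq1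
  have hD1 : (1:ℝ) ≤ (d:ℝ) := by exact_mod_cast hd1
  have hN1 : (1:ℝ) ≤ (n:ℝ) := by exact_mod_cast hn
  have hQK : (q:ℝ) + (d:ℝ) + 1 = (kk:ℝ) := by exact_mod_cast hqk
  have hQpos : (0:ℝ) < (q:ℝ) := by linarith
  have hKpos : (0:ℝ) < (kk:ℝ) := by linarith
  have hNpos : (0:ℝ) < (n:ℝ) := by linarith
  have hDpos : (0:ℝ) < (d:ℝ) := by linarith
  have hK1 : (0:ℝ) < (kk:ℝ) - 1 := by linarith
  -- `2 kk ≤ (kk/(kk-1))^n`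
  have h2k : 2 * (kk:ℝ) ≤ ((kk:ℝ) / ((kk:ℝ) - 1)) ^ n := by
    have h1R := one_le_R n M hM2 hMn hmax (p := kk - 1) (by omega) (by omega)
    have hc : (((kk - 1 : ℕ)):ℝ) = (kk:ℝ) - 1 := by
      rw [Nat.cast_sub (by omega : 1 ≤ kk)]; norm_num
    unfold R at h1R
    rw [hc, show (kk:ℝ) - 1 + 1 = (kk:ℝ) by ring] at h1R
    have hpow : (0:ℝ) < ((kk:ℝ) / ((kk:ℝ) - 1)) ^ n := by positivity
    calc 2 * (kk:ℝ) = (2 * (kk:ℝ)) * 1 := by ring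
      _ ≤ (2 * (kk:ℝ)) * (((kk:ℝ) / ((kk:ℝ) - 1)) ^ n / (2 * (kk:ℝ))) := by
          apply mul_le_mul_of_nonneg_left h1R (by linarith)
      _ = ((kk:ℝ) / ((kk:ℝ) - 1)) ^ n := by field_simp
  -- lower bound on `R n q`
  have hxpos : (0:ℝ) < (n:ℝ) * (d:ℝ) / (kk:ℝ) ^ 2 := by positivity
  have hRlb : 1 + (n:ℝ) * (d:ℝ) / (kk:ℝ) ^ 2 ≤ R n q := by
    have e2 : (((q:ℝ) + 1) * ((kk:ℝ) - 1) / ((q:ℝ) * (kk:ℝ))) ^ n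
        = (((q:ℝ) + 1) / (q:ℝ)) ^ n / ((kk:ℝ) / ((kk:ℝ) - 1)) ^ n := by
      rw [← div_pow]
      congr 1
      field_simp
    have step1 : (((q:ℝ) + 1) * ((kk:ℝ) - 1) / ((q:ℝ) * (kk:ℝ))) ^ n ≤ R n q := by
      rw [e2]
      unfold R
      have hnum : (0:ℝ) ≤ (((q:ℝ) + 1) / (q:ℝ)) ^ n := by positivity
      apply div_le_div_of_nonneg_left hnum (by linarith)
      calc 2 * ((q:ℝ) + 1) ≤ 2 * (kk:ℝ) := by linarith
        _ ≤ ((kk:ℝ) / ((kk:ℝ) - 1)) ^ n := h2k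
    have e3 : (1 + (d:ℝ) / ((q:ℝ) * (kk:ℝ))) ^ n
        = (((q:ℝ) + 1) * ((kk:ℝ) - 1) / ((q:ℝ) * (kk:ℝ))) ^ n := by
      congr 1
      field_simp
      nlinarith [hQK]
    have bern : 1 + (n:ℝ) * ((d:ℝ) / ((q:ℝ) * (kk:ℝ))) ≤ (1 + (d:ℝ) / ((q:ℝ) * (kk:ℝ))) ^ n := by
      have hge0 : (0:ℝ) ≤ (d:ℝ) / ((q:ℝ) * (kk:ℝ)) := by positivity
      have hge : (-2:ℝ) ≤ (d:ℝ) / ((q:ℝ) * (kk:ℝ)) := by linarith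
      exact one_add_mul_le_pow hge n
    have final : 1 + (n:ℝ) * (d:ℝ) / (kk:ℝ) ^ 2 ≤ 1 + (n:ℝ) * ((d:ℝ) / ((q:ℝ) * (kk:ℝ))) := by
      have hq_le : (q:ℝ) ≤ (kk:ℝ) := by linarith
      have h1 : (d:ℝ) / (kk:ℝ) ^ 2 ≤ (d:ℝ) / ((q:ℝ) * (kk:ℝ)) := by
        apply div_le_div_of_nonneg_left hDpos.le (by positivity)
        nlinarith [mul_le_mul_of_nonneg_right hq_le hKpos.le]
      have h2 := mul_le_mul_of_nonneg_left h1 hNpos.le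
      rw [mul_div_assoc]
      linarith
    calc 1 + (n:ℝ) * (d:ℝ) / (kk:ℝ) ^ 2
        ≤ 1 + (n:ℝ) * ((d:ℝ) / ((q:ℝ) * (kk:ℝ))) := final
      _ ≤ (1 + (d:ℝ) / ((q:ℝ) * (kk:ℝ))) ^ n := bern
      _ = (((q:ℝ) + 1) * ((kk:ℝ) - 1) / ((q:ℝ) * (kk:ℝ))) ^ n := e3
      _ ≤ R n q := step1
  have hRpos := R_pos n hq1
  have hR1 : 1 < R n q := by linarith
  set ρ : ℝ := (R n q)⁻¹ with hρdef
  have hρ0 : 0 ≤ ρ := by positivity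
  have hρ1 : ρ < 1 := by
    rw [hρdef, inv_lt_one_iff₀]; right; exact hR1
  have h1ρ : (0:ℝ) < 1 - ρ := by linarith
  -- head bound
  have hhead : ∑ p ∈ Icc 1 q, a n p ≤ (ρ / (1 - ρ)) * a n (q + 1) := by
    have hterm : ∀ p ∈ Icc 1 q, a n p ≤ ρ ^ (q + 1 - p) * a n (q + 1) := by
      intro p hp
      rw [Finset.mem_Icc] at hp
      exact decay n q hq1 (fun p h1 h2 => R_anti n h1 h2) (q + 1 - p) p hp.1 (by omega)
    calc ∑ p ∈ Icc 1 q, a n p ≤ ∑ p ∈ Icc 1 q, ρ ^ (q + 1 - p) * a n (q + 1) :=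
          Finset.sum_le_sum hterm
      _ = (∑ p ∈ Icc 1 q, ρ ^ (q + 1 - p)) * a n (q + 1) := by rw [Finset.sum_mul]
      _ ≤ (ρ / (1 - ρ)) * a n (q + 1) :=
          mul_le_mul_of_nonneg_right (geom_tail hρ0 hρ1 q) (a_pos n (by omega)).le
  have hratio : ρ / (1 - ρ) ≤ 1 / ((n:ℝ) * (d:ℝ) / (kk:ℝ) ^ 2) := by
    have e : ρ / (1 - ρ) = 1 / (R n q - 1) := by
      rw [div_eq_div_iff h1ρ.ne' (by linarith : (0:ℝ) < R n q - 1).ne', hρdef]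
      field_simp
    rw [e]
    apply one_div_le_one_div_of_le hxpos
    linarith
  -- tail bound
  have hq1k : kk - d = q + 1 := by omega
  have htail : (d:ℝ) * a n (q + 1) ≤ ∑ p ∈ Icc (q + 1) kk, a n p := by
    have hterm : ∀ p ∈ Icc (q + 1) kk, a n (q + 1) ≤ a n p := by
      intro p hp
      rw [Finset.mem_Icc] at hp
      exact a_mono n M hM2 hMn hmax p (q + 1) (by omega) hp.1 (le_trans hp.2 hkM)
    have hcard := Finset.card_nsmul_le_sum (Icc (q + 1) kk) (a n) (a n (q + 1)) hterm
    rw [Nat.card_Icc, show kk + 1 - (q + 1) = d + 1 by omega, nsmul_eq_mul] at hcard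
    have h1 : (d:ℝ) * a n (q + 1) ≤ ((d:ℝ) + 1) * a n (q + 1) := by
      nlinarith [a_pos n (show 1 ≤ q + 1 by omega)]
    calc (d:ℝ) * a n (q + 1) ≤ ((d:ℝ) + 1) * a n (q + 1) := h1
      _ ≤ ∑ p ∈ Icc (q + 1) kk, a n p := by exact_mod_cast hcard
  -- combine
  have hxK : 1 / ((n:ℝ) * (d:ℝ) / (kk:ℝ) ^ 2) ≤ ε * (d:ℝ) := by
    rw [div_le_iff₀ hxpos]
    rw [show ε * (d:ℝ) * ((n:ℝ) * (d:ℝ) / (kk:ℝ) ^ 2) = ε * (n:ℝ) * (d:ℝ) ^ 2 / (kk:ℝ) ^ 2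
      by ring]
    rw [le_div_iff₀ (by positivity)]
    linarith
  have hapos := a_pos n (show 1 ≤ q + 1 by omega)
  rw [hq1k]
  calc ∑ p ∈ Icc 1 q, a n p ≤ (ρ / (1 - ρ)) * a n (q + 1) := hhead
    _ ≤ (1 / ((n:ℝ) * (d:ℝ) / (kk:ℝ) ^ 2)) * a n (q + 1) :=
        mul_le_mul_of_nonneg_right hratio hapos.le
    _ ≤ (ε * (d:ℝ)) * a n (q + 1) := mul_le_mul_of_nonneg_right hxK hapos.le
    _ = ε * ((d:ℝ) * a n (q + 1)) := by ring
    _ ≤ ε * ∑ p ∈ Icc (q + 1) kk, a n p := mul_le_mul_of_nonneg_left htail hε.le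

lemma a_nonneg (n p : ℕ) : 0 ≤ a n p := by
  unfold a; positivity

lemma one_le_log_three : (1:ℝ) ≤ Real.log 3 := by
  rw [Real.le_log_iff_exp_le (by norm_num)]
  exact (Real.exp_one_lt_d9).le.trans (by norm_num)

/-- Concentration of the sum `Σ_{p=1}^{k_n} p^n/(p!·2^p)` on its last `δ_n` terms, when
`(k_n)` increases to infinity with `k_n ≤ M_n` (the mode of `p ↦ a_p^{(n)}` on `{1,…,n}`),
`δ_n = o(k_n)` and `k_n √(ln k_n)/√n = o(δ_n)`. -/
theorem stmt11 (k M δ : ℕ → ℕ)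
    (hk : Monotone k) (hk' : Tendsto k atTop atTop)
    (hM : ∀ n ≥ 1, 1 ≤ M n ∧ M n ≤ n ∧ ∀ p, 1 ≤ p → p ≤ n → a n p ≤ a n (M n))
    (hkM : ∀ᶠ n in atTop, k n ≤ M n)
    (hδ : (fun n => (δ n : ℝ)) =o[atTop] fun n => (k n : ℝ))
    (hδ' : (fun n => (k n : ℝ) * Real.sqrt (Real.log (k n)) / Real.sqrt n)
      =o[atTop] fun n => (δ n : ℝ)) :
    (fun n => ∑ p ∈ Finset.Icc 1 (k n), a n p) ~[atTop]
      fun n => ∑ p ∈ Finset.Icc (k n - δ n) (k n), a n p := by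
  -- eventual facts
  have E1 : ∀ᶠ n in atTop, 4 ≤ k n := hk'.eventually (eventually_ge_atTop 4)
  have E6 : ∀ᶠ n in atTop, 1 ≤ n := eventually_ge_atTop 1
  have E3 : ∀ᶠ n in atTop, 1 ≤ δ n := by
    filter_upwards [hδ'.def one_pos, E1, E6] with n h1 h2 h3
    by_contra hcon
    have hδ0 : δ n = 0 := by omega
    rw [hδ0] at h1
    simp only [Nat.cast_zero, norm_zero, mul_zero] at h1
    have hpos : 0 < (k n : ℝ) * Real.sqrt (Real.log (k n)) / Real.sqrt n := by
      have hk1 : (1:ℝ) < (k n : ℝ) := by exact_mod_cast (by omega : 1 < k n)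
      have hn1 : (0:ℝ) < (n : ℝ) := by exact_mod_cast (by omega : 0 < n)
      have := Real.log_pos hk1
      positivity
    rw [Real.norm_of_nonneg hpos.le] at h1
    linarith
  have E4 : ∀ᶠ n in atTop, 2 * δ n ≤ k n := by
    filter_upwards [hδ.def (show (0:ℝ) < 1/2 by norm_num)] with n h1
    rw [Real.norm_natCast, Real.norm_natCast] at h1
    have : 2 * (δ n : ℝ) ≤ (k n : ℝ) := by linarith
    exact_mod_cast this
  -- head is little-o of tail
  have ho : (fun n => ∑ p ∈ Finset.Icc 1 (k n - δ n - 1), a n p) =o[atTop]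
      (fun n => ∑ p ∈ Finset.Icc (k n - δ n) (k n), a n p) := by
    rw [isLittleO_iff]
    intro c hc
    have hsc : (0:ℝ) < Real.sqrt c := Real.sqrt_pos.mpr hc
    filter_upwards [hδ'.def hsc, E1, E3, E4, hkM, E6] with n h1 h2 h3 h4 h5 h6
    have hMn := hM n h6
    -- numeric facts
    have hk1 : (1:ℝ) < (k n : ℝ) := by exact_mod_cast (by omega : 1 < k n)
    have hn0 : (0:ℝ) < (n : ℝ) := by exact_mod_cast (by omega : 0 < n)
    have hlog : (1:ℝ) ≤ Real.log (k n) := by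
      calc (1:ℝ) ≤ Real.log 3 := one_le_log_three
        _ ≤ Real.log (k n) := by
            apply Real.log_le_log (by norm_num)
            exact_mod_cast (by omega : 3 ≤ k n)
    have hsqlog : (1:ℝ) ≤ Real.sqrt (Real.log (k n)) := by
      rw [show (1:ℝ) = Real.sqrt 1 by simp]
      exact Real.sqrt_le_sqrt hlog
    have hA : (k n : ℝ) / Real.sqrt n ≤ (k n : ℝ) * Real.sqrt (Real.log (k n)) / Real.sqrt n := by
      gcongr
      exact le_mul_of_one_le_right (by positivity) hsqlog
    rw [Real.norm_of_nonneg (by positivity), Real.norm_natCast] at h1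
    have hAB : (k n : ℝ) / Real.sqrt n ≤ Real.sqrt c * (δ n : ℝ) := le_trans hA h1
    have hsq : (k n : ℝ) ^ 2 ≤ c * (n : ℝ) * (δ n : ℝ) ^ 2 := by
      have h2 := mul_self_le_mul_self (by positivity) hAB
      have hsn : Real.sqrt n * Real.sqrt n = (n : ℝ) := Real.mul_self_sqrt hn0.le
      have hscc : Real.sqrt c * Real.sqrt c = c := Real.mul_self_sqrt hc.le
      have e1 : (k n : ℝ) / Real.sqrt n * ((k n : ℝ) / Real.sqrt n) = (k n : ℝ) ^ 2 / (n:ℝ) := by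
        rw [div_mul_div_comm, hsn]; ring
      have e2 : Real.sqrt c * (δ n : ℝ) * (Real.sqrt c * (δ n : ℝ)) = c * (δ n : ℝ) ^ 2 := by
        rw [show Real.sqrt c * (δ n:ℝ) * (Real.sqrt c * (δ n:ℝ))
          = (Real.sqrt c * Real.sqrt c) * (δ n:ℝ)^2 by ring, hscc]
      rw [e1, e2, div_le_iff₀ hn0] at h2
      linarith
    have hkey := key n (k n) (M n) (δ n) hc h6 h2 h3 h4 h5 hMn.2.1 hMn.2.2 hsq
    have hhead0 : 0 ≤ ∑ p ∈ Finset.Icc 1 (k n - δ n - 1), a n p :=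
      Finset.sum_nonneg fun p _ => a_nonneg n p
    have htail0 : 0 ≤ ∑ p ∈ Finset.Icc (k n - δ n) (k n), a n p :=
      Finset.sum_nonneg fun p _ => a_nonneg n p
    rw [Real.norm_of_nonneg hhead0, Real.norm_of_nonneg htail0]
    exact hkey
  -- conclude
  rw [IsEquivalent]
  apply ho.congr' _ EventuallyEq.rfl
  filter_upwards [E1, E4] with n h1 h2
  have hsplit : (∑ p ∈ Finset.Icc 1 (k n - δ n - 1), a n p)
      + ∑ p ∈ Finset.Icc (k n - δ n) (k n), a n p = ∑ p ∈ Finset.Icc 1 (k n), a n p := by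
    rw [← Finset.Ico_add_one_right_eq_Icc (k n - δ n) (k n), ← Finset.Ico_add_one_right_eq_Icc 1 (k n),
      show Finset.Icc 1 (k n - δ n - 1) = Finset.Ico 1 (k n - δ n) by
        rw [← Finset.Ico_add_one_right_eq_Icc]; congr 1; omega]
    exact Finset.sum_Ico_consecutive _ (by omega) (by omega)
  simp only [Pi.sub_apply]
  linarith
end

section
/- In the generalised Catalan model with k variables, the number of leaf-labellings of n leaves having at least r repetitions among d marked pattern leaves is at most 2^n·k^{n−r}·Σ_{j=1}^{r} C(d, r+j)·S(r+j, j), where a repetition count r among d leaves means d minus the number of distinct variables used on those leaves is at least r. -/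
/-!
Forgetting polarities accounts for the factor `2 ^ n`. If the marked leaves carry at least `r`
repetitions, a smallest set `T` of marked leaves still carrying `r` repetitions carries exactly `r`,
and no variable occurs only once on `T`; hence `#T = r + j` where `1 ≤ j ≤ r` is the number of
variables on `T`. For a fixed such `T`, the labellings using exactly `j` variables on `T` number at
most `S(r + j, j) · k ^ j · k ^ (n - r - j)`: partition `T` into `j` classes, name the classes, and
label the other leaves freely.
-/

open Finset

variable {ι β : Type*}

def repetitions [DecidableEq β] (g : ι → β) (T : Finset ι) : ℕ := #T - #(T.image g)

lemma repetitions_erase_add [DecidableEq ι] [DecidableEq β] (g : ι → β) {T : Finset ι} {x : ι}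
    (hx : x ∈ T) :
    repetitions g (T.erase x) + (if g x ∈ (T.erase x).image g then 1 else 0) =
      repetitions g T := by
  have hinsert : T.image g = insert (g x) ((T.erase x).image g) := by
    rw [← image_insert, insert_erase hx]
  have hcard := card_erase_of_mem hx
  have hpos : 0 < #T := card_pos.2 ⟨x, hx⟩
  have hle : #((T.erase x).image g) ≤ #(T.erase x) := card_image_le
  unfold repetitions
  split_ifs with hshared
  · rw [hinsert, insert_eq_of_mem hshared]
    omega
  · rw [hinsert, card_insert_of_notMem hshared]
    omega

lemma exists_subset_repetitions_eq [DecidableEq ι] [DecidableEq β] (g : ι → β) {D : Finset ι}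
    {r : ℕ} (hr : 1 ≤ r) (hD : r ≤ repetitions g D) :
    ∃ j ∈ Icc 1 r, ∃ T ∈ D.powersetCard (r + j), #(T.image g) = j := by
  -- Take `T` of minimal size; removing one leaf lowers the repetitions by at most one, and
  -- removing a leaf whose variable occurs only once on `T` does not lower them at all.
  obtain ⟨T, hT, hmin⟩ := exists_min_image {T ∈ D.powerset | r ≤ repetitions g T} card
    ⟨D, mem_filter.2 ⟨mem_powerset_self D, hD⟩⟩
  obtain ⟨hTD, hrT⟩ := mem_filter.1 hT
  rw [mem_powerset] at hTD
  have herase : ∀ x ∈ T, repetitions g (T.erase x) < r := fun x hx => by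
    by_contra! hle
    have := hmin (T.erase x) (mem_filter.2 ⟨mem_powerset.2 ((erase_subset x T).trans hTD), hle⟩)
    rw [card_erase_of_mem hx] at this
    have := card_pos.2 ⟨x, hx⟩
    omega
  have hleT : #(T.image g) ≤ #T := card_image_le
  obtain ⟨x₀, hx₀⟩ : T.Nonempty := by
    rw [← card_pos]
    unfold repetitions at hrT
    omega
  have hrep : repetitions g T = r := by
    have hstep := repetitions_erase_add g hx₀
    have := herase x₀ hx₀
    split_ifs at hstep <;> omega
  have hexact : #T = r + #(T.image g) := by
    unfold repetitions at hrep
    omega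
  have hshared : ∀ x ∈ T, g x ∈ (T.erase x).image g := fun x hx => by
    by_contra hx'
    have hstep := repetitions_erase_add g hx
    have := herase x hx
    rw [if_neg hx'] at hstep
    omega
  have hclasses : 2 * #(T.image g) ≤ #T := by
    refine mul_card_image_le_card T 2 fun b hb => ?_
    obtain ⟨x, hx, rfl⟩ := mem_image.1 hb
    obtain ⟨y, hy, hgy⟩ := mem_image.1 (hshared x hx)
    refine one_lt_card.2 ⟨x, mem_filter.2 ⟨hx, rfl⟩, y, mem_filter.2 ⟨mem_of_mem_erase hy, hgy⟩, ?_⟩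
    exact (ne_of_mem_erase hy).symm
  have hpos : 1 ≤ #(T.image g) := card_pos.2 ⟨g x₀, mem_image_of_mem g hx₀⟩
  exact ⟨#(T.image g), mem_Icc.2 ⟨hpos, by omega⟩, T, mem_powersetCard.2 ⟨hTD, hexact⟩, rfl⟩

lemma image_univ_fin_cons [DecidableEq β] {m : ℕ} (x : β) (h : Fin m → β) :
    univ.image (Fin.cons x h : Fin (m + 1) → β) = insert x (univ.image h) := by
  ext y
  simp [Fin.exists_fin_succ, eq_comm]

lemma card_filter_card_insert_eq_succ_le [Fintype β] [DecidableEq β] (S : Finset β) (j : ℕ) :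
    #{x | #(insert x S) = j + 1} ≤
      (if #S = j + 1 then j + 1 else 0) + (if #S = j then Fintype.card β else 0) := by
  by_cases hS : #S = j + 1
  · have hsub : ({x | #(insert x S) = j + 1} : Finset β) ⊆ S := fun x hx => by
      by_contra hxS
      rw [mem_filter, card_insert_of_notMem hxS] at hx
      omega
    simpa [hS] using card_le_card hsub
  by_cases hS' : #S = j
  · simpa [hS'] using card_filter_le univ _
  · have hempty : ({x | #(insert x S) = j + 1} : Finset β) = ∅ := filter_false_of_mem fun x _ => by
      have := card_insert_le x S
      have := card_le_card (subset_insert x S)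
      omega
    simp [hempty]

lemma card_filter_card_image_univ_fin_le [Fintype β] [DecidableEq β] (m j : ℕ) :
    #{h : Fin m → β | #(univ.image h) = j} ≤ stirling m j * Fintype.card β ^ j := by
  induction m generalizing j with
  | zero => cases j <;> simp [stirling, univ_unique]
  | succ m ih =>
    cases j with
    | zero => simp [stirling, univ_nonempty.ne_empty]
    | succ j =>
      calc #{h : Fin (m + 1) → β | #(univ.image h) = j + 1}
          = ∑ h : Fin m → β, #{x | #(insert x (univ.image h)) = j + 1} := by
            rw [card_filter, ← (Fin.consEquiv fun _ => β).sum_comp, Fintype.sum_prod_type_right]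
            refine sum_congr rfl fun h _ => ?_
            rw [card_filter]
            simp only [Fin.consEquiv, Equiv.coe_fn_mk, image_univ_fin_cons]
        _ ≤ ∑ h : Fin m → β, ((if #(univ.image h) = j + 1 then j + 1 else 0) +
              (if #(univ.image h) = j then Fintype.card β else 0)) :=
            sum_le_sum fun h _ => card_filter_card_insert_eq_succ_le _ j
        _ = (j + 1) * #{h : Fin m → β | #(univ.image h) = j + 1} +
              Fintype.card β * #{h : Fin m → β | #(univ.image h) = j} := by
            simp only [sum_add_distrib, ← sum_filter, sum_const, smul_eq_mul]
            ring
        _ ≤ (j + 1) * (stirling m (j + 1) * Fintype.card β ^ (j + 1)) +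
              Fintype.card β * (stirling m j * Fintype.card β ^ j) := by
            gcongr <;> apply ih
        _ = stirling (m + 1) (j + 1) * Fintype.card β ^ (j + 1) := by
            rw [stirling]; ring

lemma card_filter_card_image_univ_le [Fintype β] [DecidableEq β] {α : Type*} [Fintype α]
    [DecidableEq α] (j : ℕ) :
    #{h : α → β | #(univ.image h) = j} ≤ stirling (Fintype.card α) j * Fintype.card β ^ j := by
  calc #{h : α → β | #(univ.image h) = j}
      = #{h : Fin (Fintype.card α) → β | #(univ.image h) = j} :=
        card_equiv ((Fintype.equivFin α).arrowCongr (Equiv.refl β)) fun h => by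
          simp only [mem_filter, mem_univ, true_and]
          rw [← image_univ_equiv (Fintype.equivFin α).symm, image_image]
          rfl
    _ ≤ _ := card_filter_card_image_univ_fin_le _ j

lemma image_univ_subtype_val [DecidableEq β] (T : Finset ι) (g : ι → β) :
    univ.image (fun x : T => g x) = T.image g := by
  ext y
  simp

lemma card_filter_card_image_eq_le [Fintype ι] [DecidableEq ι] [Fintype β] [DecidableEq β]
    (T : Finset ι) (j : ℕ) :
    #{g : ι → β | #(T.image g) = j} ≤
      stirling #T j * Fintype.card β ^ (Fintype.card ι - #T + j) := by
  calc #{g : ι → β | #(T.image g) = j}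
      = #{p : (T → β) × ({x // x ∉ T} → β) | #(univ.image p.1) = j} :=
        card_equiv (Equiv.piEquivPiSubtypeProd (· ∈ T) fun _ => β) fun g => by
          simp [Equiv.piEquivPiSubtypeProd, image_univ_subtype_val, -univ_eq_attach]
    _ = #{h : T → β | #(univ.image h) = j} * Fintype.card β ^ (Fintype.card ι - #T) := by
        rw [← univ_product_univ, filter_product_left (fun h : T → β => #(univ.image h) = j),
          card_product, card_univ, Fintype.card_fun, Fintype.card_subtype_compl, Fintype.card_coe]
    _ ≤ stirling #T j * Fintype.card β ^ j * Fintype.card β ^ (Fintype.card ι - #T) := by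
        gcongr
        simpa using card_filter_card_image_univ_le (α := T) (β := β) j
    _ = _ := by ring

lemma card_filter_le_repetitions_le [Fintype ι] [DecidableEq ι] [Fintype β] [DecidableEq β]
    (D : Finset ι) {r : ℕ} (hr : 1 ≤ r) :
    #{g : ι → β | r ≤ repetitions g D} ≤
      Fintype.card β ^ (Fintype.card ι - r) *
        ∑ j ∈ Icc 1 r, (#D).choose (r + j) * stirling (r + j) j := by
  calc #{g : ι → β | r ≤ repetitions g D}
      ≤ #((Icc 1 r).biUnion fun j => (D.powersetCard (r + j)).biUnion fun T =>
          {g : ι → β | #(T.image g) = j}) := card_le_card fun g hg => by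
        obtain ⟨j, hj, T, hT, hTg⟩ := exists_subset_repetitions_eq g hr (mem_filter.1 hg).2
        exact mem_biUnion.2 ⟨j, hj, mem_biUnion.2 ⟨T, hT, mem_filter.2 ⟨mem_univ g, hTg⟩⟩⟩
    _ ≤ ∑ j ∈ Icc 1 r, ∑ T ∈ D.powersetCard (r + j), #{g : ι → β | #(T.image g) = j} :=
        card_biUnion_le.trans (sum_le_sum fun j _ => card_biUnion_le)
    _ ≤ ∑ j ∈ Icc 1 r, ∑ T ∈ D.powersetCard (r + j),
          stirling (r + j) j * Fintype.card β ^ (Fintype.card ι - r) := by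
        gcongr with j _ T hT
        have hT : #T = r + j := (mem_powersetCard.1 hT).2
        have hTι : #T ≤ Fintype.card ι := card_le_univ T
        calc #{g : ι → β | #(T.image g) = j}
            ≤ stirling #T j * Fintype.card β ^ (Fintype.card ι - #T + j) :=
              card_filter_card_image_eq_le T j
          _ = stirling (r + j) j * Fintype.card β ^ (Fintype.card ι - r) := by
              rw [hT, show Fintype.card ι - (r + j) + j = Fintype.card ι - r by omega]
    _ = _ := by
        simp only [sum_const, card_powersetCard, smul_eq_mul, mul_sum]
        exact sum_congr rfl fun j _ => by ring

lemma card_filter_comp_fst [Fintype ι] [DecidableEq ι] [Fintype β] {γ : Type*} [Fintype γ]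
    (P : (ι → β) → Prop) [DecidablePred P] :
    #{f : ι → β × γ | P fun i => (f i).1} =
      #{g : ι → β | P g} * Fintype.card γ ^ Fintype.card ι := by
  rw [card_equiv (Equiv.arrowProdEquivProdArrow ι (fun _ => β) fun _ => γ)
      (t := {p : (ι → β) × (ι → γ) | P p.1}) fun f => by simp [Equiv.arrowProdEquivProdArrow],
    ← univ_product_univ, filter_product_left, card_product, card_univ, Fintype.card_fun]

theorem stmt15_general (n k d r : ℕ) (hr : 1 ≤ r)
    (D : Finset (Fin n)) (hD : D.card = d) :
    (Finset.univ.filter fun f : Fin n → Fin k × Bool =>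
        r ≤ d - (D.image fun i => (f i).1).card).card ≤
      2 ^ n * k ^ (n - r) *
        ∑ j ∈ Finset.Icc 1 r, Nat.choose d (r + j) * stirling (r + j) j := by
  subst hD
  rw [card_filter_comp_fst fun g : Fin n → Fin k => r ≤ #D - #(D.image g), Fintype.card_bool,
    Fintype.card_fin, mul_comm, mul_assoc]
  gcongr
  exact (card_filter_le_repetitions_le (β := Fin k) D hr).trans_eq (by simp)

/-- In the generalised Catalan model with `k` variables, the number of leaf-labellings
(by literals, i.e. a variable in `Fin k` and a polarity) of `n` leaves having at least `r`
repetitions among the `d` marked pattern leaves `D` — where the number of repetitions is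
`d` minus the number of distinct variables appearing on the marked leaves — is at most
`2^n · k^{n−r} · Σ_{j=1}^{r} C(d, r+j) · S(r+j, j)`. -/
theorem stmt15 (n k d r : ℕ) (hr : 1 ≤ r) (hrn : r ≤ n)
    (D : Finset (Fin n)) (hD : D.card = d) :
    (Finset.univ.filter fun f : Fin n → Fin k × Bool =>
        r ≤ d - (D.image fun i => (f i).1).card).card ≤
      2 ^ n * k ^ (n - r) *
        ∑ j ∈ Finset.Icc 1 r, Nat.choose d (r + j) * stirling (r + j) j :=
  stmt15_general n k d r hr D hD
end
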